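/- For every complex number x, every even positive integer m, and every natural number n, the sum over k from 0 to n of x^(n-k) * (F_m * L_{m(k+1)} - (x * L_m - 2) * F_{mk}) equals L_m * F_{m(n+1)}, where F and L are the Fibonacci and Lucas numbers. -/
import Mathlib


open Finset

noncomputable def fibC : ℕ → ℂ
  | 0 => 0
  | 1 => 1
  | n + 2 => fibC (n + 1) + fibC n

noncomputable def lucasC : ℕ → ℂ
  | 0 => 2
  | 1 => 1
  | n + 2 => lucasC (n + 1) + lucasC n

lemma fibC_add : ∀ (m j : ℕ),
    fibC (m + j + 1) = fibC (m + 1) * fibC (j + 1) + fibC m * fibC j := by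
  intro m
  induction m with
  | zero => intro j; simp [fibC]
  | succ m ih =>
      intro j
      have h1 : m + 1 + j + 1 = m + (j + 1) + 1 := by ring
      rw [h1, ih (j + 1)]
      show fibC (m + 1) * fibC (j + 2) + fibC m * fibC (j + 1) = _
      rw [show fibC (j + 2) = fibC (j + 1) + fibC j from rfl,
        show fibC (m + 2) = fibC (m + 1) + fibC m from rfl]
      ring

lemma lucasC_succ : ∀ j : ℕ, lucasC (j + 1) = fibC (j + 1) + 2 * fibC j := by
  intro j
  induction j using Nat.twoStepInduction with
  | zero => simp [fibC, lucasC]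
  | one => simp [fibC, lucasC]
  | more j ih1 ih2 =>
      rw [show lucasC (j + 2 + 1) = lucasC (j + 2) + lucasC (j + 1) from rfl,
        show lucasC (j + 2) = lucasC (j + 1 + 1) from rfl,
        show fibC (j + 2 + 1) = fibC (j + 2) + fibC (j + 1) from rfl,
        show fibC (j + 2) = fibC (j + 1) + fibC j from rfl, ih1, ih2,
        show fibC (j + 1 + 1) = fibC (j + 1) + fibC j from rfl]
      ring

lemma lucasC_add : ∀ (m j : ℕ),
    lucasC (m + j + 1) = lucasC (m + 1) * fibC (j + 1) + lucasC m * fibC j := by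
  intro m
  induction m with
  | zero => intro j; simp [fibC, lucasC, lucasC_succ j]
  | succ m ih =>
      intro j
      have h1 : m + 1 + j + 1 = m + (j + 1) + 1 := by ring
      rw [h1, ih (j + 1)]
      show lucasC (m + 1) * fibC (j + 2) + lucasC m * fibC (j + 1) = _
      rw [show fibC (j + 2) = fibC (j + 1) + fibC j from rfl,
        show lucasC (m + 2) = lucasC (m + 1) + lucasC m from rfl]
      ring

lemma cassini : ∀ k : ℕ,
    lucasC (k + 1) * fibC k - fibC (k + 1) * lucasC k = (-1 : ℂ) ^ k * (-2) := by
  intro k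
  induction k with
  | zero => simp [fibC, lucasC]
  | succ k ih =>
      rw [show fibC (k + 2) = fibC (k + 1) + fibC k from rfl,
        show lucasC (k + 2) = lucasC (k + 1) + lucasC k from rfl, pow_succ]
      linear_combination -ih

lemma key (m : ℕ) (hm : Even m) (hm' : 0 < m) (j : ℕ) :
    lucasC m * fibC (j + m) = fibC m * lucasC (j + m) + 2 * fibC j := by
  obtain ⟨s, rfl⟩ := Nat.exists_eq_add_of_lt hm'
  rw [zero_add] at *
  have hadd : s + j + 1 = j + (s + 1) := by ring
  have hf := fibC_add s j
  have hl := lucasC_add s j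
  rw [hadd] at hf hl
  have hodds : Odd s := Nat.not_even_iff_odd.mp (Nat.even_add_one.mp hm)
  have hc := cassini s
  rw [hodds.neg_one_pow] at hc
  rw [hf, hl]
  linear_combination fibC j * hc

theorem stmt16 (x : ℂ) (m : ℕ) (hm : Even m) (hm' : 0 < m) (n : ℕ) :
    ∑ k ∈ Finset.range (n + 1),
        x ^ (n - k) * (fibC m * lucasC (m * (k + 1)) - (x * lucasC m - 2) * fibC (m * k)) =
      lucasC m * fibC (m * (n + 1)) := by
  induction n with
  | zero =>
      simp [fibC]
      ring
  | succ n ih =>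
      rw [Finset.sum_range_succ]
      have hstep : ∀ k ∈ Finset.range (n + 1),
          x ^ (n + 1 - k) * (fibC m * lucasC (m * (k + 1)) - (x * lucasC m - 2) * fibC (m * k))
          = x * (x ^ (n - k) *
              (fibC m * lucasC (m * (k + 1)) - (x * lucasC m - 2) * fibC (m * k))) := by
        intro k hk
        have hkn : k ≤ n := Nat.lt_succ_iff.mp (Finset.mem_range.mp hk)
        rw [show n + 1 - k = (n - k) + 1 by omega, pow_succ]
        ring
      rw [Finset.sum_congr rfl hstep, ← Finset.mul_sum, ih]
      have hkey := key m hm hm' (m * (n + 1))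
      rw [show m * (n + 1) + m = m * (n + 2) by ring] at hkey
      rw [Nat.sub_self, pow_zero]
      linear_combination -hkey
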